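/- Let λ_1, λ_2, λ_3 be real numbers with 0 < λ_2 < (2 + 2√2) λ_1 and λ_3 > 0. Then z_1 = z_2 = 0 is the only real solution of the system λ_1 z_1 + λ_3 (z_1 − z_2) + λ_2 · z_1²(z_1 − 1)/(1 + z_1²) = 0 and λ_1 z_2 + λ_3 (z_2 − z_1) + λ_2 · z_2²(z_2 − 1)/(1 + z_2²) = 0. -/
import Mathlib

theorem coupled_cubic_eq_only_zero_solution (l₁ l₂ l₃ : ℝ) (h₂ : 0 < l₂)
    (h : l₂ < (2 + 2 * Real.sqrt 2) * l₁) (h₃ : 0 < l₃) :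
    ∀ z₁ z₂ : ℝ,
      (l₁ * z₁ + l₃ * (z₁ - z₂) + l₂ * (z₁ ^ 2 * (z₁ - 1) / (1 + z₁ ^ 2)) = 0 ∧
       l₁ * z₂ + l₃ * (z₂ - z₁) + l₂ * (z₂ ^ 2 * (z₂ - 1) / (1 + z₂ ^ 2)) = 0)
      ↔ (z₁ = 0 ∧ z₂ = 0) := by
  have hs : Real.sqrt 2 ^ 2 = 2 := Real.sq_sqrt (by norm_num)
  have hs0 : (0:ℝ) < Real.sqrt 2 := Real.sqrt_pos.mpr (by norm_num)
  have hl₁ : 0 < l₁ := by nlinarith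
  have hs1 : (1:ℝ) < Real.sqrt 2 := by
    nlinarith [Real.sq_sqrt (show (0:ℝ) ≤ 2 by norm_num), Real.sqrt_nonneg 2]
  have hfac : (l₂ - (2 + 2 * Real.sqrt 2) * l₁) * (l₂ - (2 - 2 * Real.sqrt 2) * l₁) < 0 := by
    apply mul_neg_of_neg_of_pos (by linarith)
    nlinarith
  have h8 : Real.sqrt 2 ^ 2 * l₁ ^ 2 = 2 * l₁ ^ 2 := by rw [hs]
  have hdisc : l₂ ^ 2 < 4 * (l₁ + l₂) * l₁ := by nlinarith [hfac, h8]
  have hP : ∀ z : ℝ, 0 < (l₁ + l₂) * z ^ 2 - l₂ * z + l₁ := by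
    intro z
    nlinarith [sq_nonneg (2 * (l₁ + l₂) * z - l₂), sq_nonneg z]
  intro z₁ z₂
  constructor
  · rintro ⟨e1, e2⟩
    have h1 : (0:ℝ) < 1 + z₁ ^ 2 := by positivity
    have h2 : (0:ℝ) < 1 + z₂ ^ 2 := by positivity
    have e1' : l₁ * z₁ * (1 + z₁ ^ 2) + l₃ * (z₁ - z₂) * (1 + z₁ ^ 2)
        + l₂ * (z₁ ^ 2 * (z₁ - 1)) = 0 := by
      field_simp at e1; linarith
    have e2' : l₁ * z₂ * (1 + z₂ ^ 2) + l₃ * (z₂ - z₁) * (1 + z₂ ^ 2)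
        + l₂ * (z₂ ^ 2 * (z₂ - 1)) = 0 := by
      field_simp at e2; linarith
    have key : z₁ ^ 2 * ((l₁ + l₂) * z₁ ^ 2 - l₂ * z₁ + l₁) * (1 + z₂ ^ 2)
        + z₂ ^ 2 * ((l₁ + l₂) * z₂ ^ 2 - l₂ * z₂ + l₁) * (1 + z₁ ^ 2)
        + l₃ * (z₁ - z₂) ^ 2 * (1 + z₁ ^ 2) * (1 + z₂ ^ 2) = 0 := by
      linear_combination (z₁ * (1 + z₂ ^ 2)) * e1' + (z₂ * (1 + z₁ ^ 2)) * e2'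
    have t1 : 0 ≤ z₁ ^ 2 * ((l₁ + l₂) * z₁ ^ 2 - l₂ * z₁ + l₁) * (1 + z₂ ^ 2) :=
      mul_nonneg (mul_nonneg (sq_nonneg _) (hP z₁).le) h2.le
    have t2 : 0 ≤ z₂ ^ 2 * ((l₁ + l₂) * z₂ ^ 2 - l₂ * z₂ + l₁) * (1 + z₁ ^ 2) :=
      mul_nonneg (mul_nonneg (sq_nonneg _) (hP z₂).le) h1.le
    have t3 : 0 ≤ l₃ * (z₁ - z₂) ^ 2 * (1 + z₁ ^ 2) * (1 + z₂ ^ 2) := by positivity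
    have hz1 : z₁ = 0 := by
      by_contra hz
      have : 0 < z₁ ^ 2 * ((l₁ + l₂) * z₁ ^ 2 - l₂ * z₁ + l₁) * (1 + z₂ ^ 2) :=
        mul_pos (mul_pos (by positivity) (hP z₁)) h2
      linarith
    have hz2 : z₂ = 0 := by
      by_contra hz
      have : 0 < z₂ ^ 2 * ((l₁ + l₂) * z₂ ^ 2 - l₂ * z₂ + l₁) * (1 + z₁ ^ 2) :=
        mul_pos (mul_pos (by positivity) (hP z₂)) h1
      linarith
    exact ⟨hz1, hz2⟩
  · rintro ⟨rfl, rfl⟩; norm_num
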